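/- Let q be even and let V be a hyperbolic orthogonal F_q-space of dimension 4m (m ≥ 2) with quadratic form Q and associated alternating form. Let z be a point of V with Q(z) ≠ 0 (nonsingular). If Σ is a maximal orthogonal partial spread of V, then Σ/z := { ⟨z^⊥ ∩ X, z⟩/z : X ∈ Σ } is a maximal symplectic partial spread of the (4m−2)-dimensional symplectic space z^⊥/z. -/

import Mathlib

/-!
In characteristic 2 the nonsingular point `z` is isotropic for the alternating form `B`, and a
totally singular `2m`-space `X` is not contained in `z^⊥` (else `⟨X, z⟩` would be a totally
isotropic `(2m+1)`-space), so `⟨z^⊥ ∩ X, z⟩` is a totally isotropic `2m`-space. Two of them meet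
only in `⟨z⟩`, because `Q (y + c z) = c² Q z` for a singular `y ∈ z^⊥`.

For maximality, let `U ∋ z` be a totally isotropic `2m`-space meeting every `⟨z^⊥ ∩ X, z⟩` only
in `⟨z⟩`. Squaring is onto `F_q`, so the singular vectors of `U` form a totally singular
hyperplane `U₀` of odd dimension `2m - 1`, disjoint from every member of `Σ`. Each `X ∈ Σ` meets
`U₀^⊥` (of dimension `2m + 1`) in exactly a line. For `X₁ ≠ X₂` in `Σ`, the form
`(x, y) ↦ B (π₁ x) y` on `U₀`, with `π₁` the projection onto `X₁` along `X₂`, is alternating and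
hence degenerate by parity; a radical vector shows that the lines `X₁ ∩ U₀^⊥` and `X₂ ∩ U₀^⊥` are
orthogonal. But maximality of `Σ`, applied to the totally singular spaces `⟨U₀, v⟩` for singular
`v ∈ U₀^⊥ \ U₀`, yields a member whose line is not orthogonal to a given one.
-/

open Module Submodule QuadraticMap
open LinearMap.BilinForm (orthogonal)

theorem LinearMap.IsAlt.exists_ne_zero_forall_eq_zero_of_odd {K V : Type*} [Field K]
    [AddCommGroup V] [Module K V] [FiniteDimensional K V] {B : V →ₗ[K] V →ₗ[K] K}
    (hB : B.IsAlt) (hodd : Odd (finrank K V)) : ∃ x ≠ 0, ∀ y, B x y = 0 := by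
  induction hn : finrank K V using Nat.strong_induction_on generalizing V with
  | _ n ih =>
  by_cases hB0 : ∀ x y, B x y = 0
  · have : Nontrivial V := Module.finrank_pos_iff.mp hodd.pos
    obtain ⟨x, hx⟩ := exists_ne (0 : V)
    exact ⟨x, hx, hB0 x⟩
  push Not at hB0
  obtain ⟨e, f₀, hef₀⟩ := hB0
  set f := (B e f₀)⁻¹ • f₀
  have hef : B e f = 1 := by simp [f, hef₀]
  have hfe : B f e = -1 := by rw [← hB.neg, hef]
  -- the kernel of `g` is the orthogonal complement of the hyperbolic pair `e, f`
  let g : V →ₗ[K] K × K := (B e).prod (B f)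
  have hg : ∀ p : K × K, g (p.1 • f - p.2 • e) = p := fun p => by
    simp [g, hef, hfe, hB.self_eq_zero]
  have hker : finrank K (LinearMap.ker g) + 2 = n := by
    have := LinearMap.finrank_range_add_finrank_ker g
    rw [LinearMap.range_eq_top.mpr fun p => ⟨_, hg p⟩, finrank_top, Module.finrank_prod,
      finrank_self, hn] at this
    omega
  have hodd' : Odd (finrank K (LinearMap.ker g)) := by
    rw [hn, ← hker] at hodd
    exact (Nat.odd_add.mp hodd).mpr even_two
  obtain ⟨x, hx0, hx⟩ := ih _ (by omega) (B := B.compl₁₂ (LinearMap.ker g).subtype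
    (LinearMap.ker g).subtype) (fun x => hB x) hodd' rfl
  refine ⟨x, by simpa using hx0, fun y => ?_⟩
  have hxg : B e x = 0 ∧ B f x = 0 := by simpa [g] using x.2
  have hy : y - ((g y).1 • f - (g y).2 • e) ∈ LinearMap.ker g := by simp [hg]
  calc B x y = B x (y - ((g y).1 • f - (g y).2 • e)) + B x ((g y).1 • f - (g y).2 • e) := by
        rw [← map_add, sub_add_cancel]
    _ = 0 := by
        rw [show B x (y - _) = 0 from hx ⟨_, hy⟩]
        simp [← hB.neg f, ← hB.neg e, hxg]

theorem Submodule.finrank_inf_ker_add_one {K V : Type*} [Field K] [AddCommGroup V] [Module K V]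
    {X : Submodule K V} [FiniteDimensional K X] {f : V →ₗ[K] K} (h : ¬X ≤ LinearMap.ker f) :
    finrank K (X ⊓ LinearMap.ker f : Submodule K V) + 1 = finrank K X := by
  have hf : f ∘ₗ X.subtype ≠ 0 := fun h0 => h fun x hx => by
    simpa using LinearMap.congr_fun h0 ⟨x, hx⟩
  rw [← Module.Dual.finrank_ker_add_one_of_ne_zero hf, ← finrank_map_subtype_eq,
    LinearMap.ker_comp, map_comap_subtype]

namespace QuadraticMap

variable {K V : Type*} [Field K] [AddCommGroup V] [Module K V] (Q : QuadraticForm K V)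

def IsTotallySingular (W : Submodule K V) : Prop := ∀ v ∈ W, Q v = 0

def IsTotallyIsotropic (W : Submodule K V) : Prop := ∀ u ∈ W, ∀ v ∈ W, polar Q u v = 0

/-- The space `⟨z^⊥ ∩ X, z⟩`: the projection `X/z` of `X` from `z`, pulled back to `V`. -/
def projFrom (z : V) (X : Submodule K V) : Submodule K V :=
  X ⊓ LinearMap.ker (polarBilin Q z) ⊔ span K {z}

variable {Q}

theorem map_add_eq_add_add_polar (x y : V) : Q (x + y) = Q x + Q y + polar Q x y := by
  rw [polar]; ring

theorem isRefl_polarBilin : (polarBilin Q).IsRefl := fun x y h => by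
  rwa [polarBilin_apply_apply, polar_comm] at h

theorem polar_eq_zero_of_mem_orthogonal {W : Submodule K V} {x w : V}
    (hx : x ∈ orthogonal (polarBilin Q) W) (hw : w ∈ W) : polar Q w x = 0 :=
  hx w hw

theorem span_singleton_le_orthogonal_of_le_ker {W : Submodule K V} {z : V}
    (h : W ≤ LinearMap.ker (polarBilin Q z)) : span K {z} ≤ orthogonal (polarBilin Q) W :=
  (span_singleton_le_iff_mem _ _).mpr fun w hw => by
    rw [polarBilin_apply_apply, polar_comm]; exact h hw

theorem isTotallySingular_span_singleton {v : V} (hv : Q v = 0) :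
    IsTotallySingular Q (span K {v}) := fun x hx => by
  obtain ⟨c, rfl⟩ := mem_span_singleton.mp hx
  simp [QuadraticMap.map_smul, hv]

theorem isTotallyIsotropic_span_singleton [CharP K 2] (z : V) :
    IsTotallyIsotropic Q (span K {z}) := fun x hx y hy => by
  obtain ⟨a, rfl⟩ := mem_span_singleton.mp hx
  obtain ⟨b, rfl⟩ := mem_span_singleton.mp hy
  simp [polar_smul_left, polar_smul_right, polar_self, CharTwo.two_eq_zero]

theorem IsTotallySingular.isTotallyIsotropic {W : Submodule K V} (hW : IsTotallySingular Q W) :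
    IsTotallyIsotropic Q W := fun u hu v hv => by
  rw [polar, hW _ (add_mem hu hv), hW u hu, hW v hv, sub_zero, sub_zero]

theorem IsTotallyIsotropic.mono {W W' : Submodule K V} (hW : IsTotallyIsotropic Q W)
    (h : W' ≤ W) : IsTotallyIsotropic Q W' := fun u hu v hv => hW u (h hu) v (h hv)

theorem IsTotallySingular.sup {W₁ W₂ : Submodule K V} (h₁ : IsTotallySingular Q W₁)
    (h₂ : IsTotallySingular Q W₂) (h₁₂ : W₂ ≤ orthogonal (polarBilin Q) W₁) :
    IsTotallySingular Q (W₁ ⊔ W₂) := fun v hv => by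
  obtain ⟨x, hx, y, hy, rfl⟩ := mem_sup.mp hv
  rw [map_add_eq_add_add_polar, h₁ x hx, h₂ y hy, polar_eq_zero_of_mem_orthogonal (h₁₂ hy) hx,
    add_zero, add_zero]

theorem IsTotallyIsotropic.sup {W₁ W₂ : Submodule K V} (h₁ : IsTotallyIsotropic Q W₁)
    (h₂ : IsTotallyIsotropic Q W₂) (h₁₂ : W₂ ≤ orthogonal (polarBilin Q) W₁) :
    IsTotallyIsotropic Q (W₁ ⊔ W₂) := fun u hu v hv => by
  obtain ⟨x, hx, y, hy, rfl⟩ := mem_sup.mp hu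
  obtain ⟨x', hx', y', hy', rfl⟩ := mem_sup.mp hv
  rw [polar_add_left, polar_add_right, polar_add_right, polar_comm Q y x', h₁ x hx x' hx',
    h₂ y hy y' hy', polar_eq_zero_of_mem_orthogonal (h₁₂ hy') hx,
    polar_eq_zero_of_mem_orthogonal (h₁₂ hy) hx']
  simp

theorem IsTotallyIsotropic.two_mul_finrank_le [FiniteDimensional K V] {W : Submodule K V}
    (hW : IsTotallyIsotropic Q W) (hQ : (polarBilin Q).Nondegenerate) :
    2 * finrank K W ≤ finrank K V := by
  have hle : W ≤ orthogonal (polarBilin Q) W := fun x hx w hw => hW w hw x hx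
  have := (finrank_mono hle).trans_eq (LinearMap.BilinForm.finrank_orthogonal hQ W)
  have := W.finrank_le
  omega

theorem exists_map_eq_zero_polar_eq_one {W : Submodule K V} {v w : V} (hv : Q v = 0)
    (hvW : v ∈ W) (hwW : w ∈ W) (hvw : polar Q v w ≠ 0) :
    ∃ u ∈ W, Q u = 0 ∧ polar Q v u = 1 := by
  obtain ⟨w', hw'W, hvw'⟩ : ∃ w' ∈ W, polar Q v w' = 1 :=
    ⟨_, smul_mem _ (polar Q v w)⁻¹ hwW, by simp [polar_smul_right, hvw]⟩
  refine ⟨w' - Q w' • v, sub_mem hw'W (smul_mem _ _ hvW), ?_, ?_⟩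
  · rw [sub_eq_add_neg, map_add_eq_add_add_polar, QuadraticMap.map_neg, QuadraticMap.map_smul,
      polar_neg_right, polar_smul_right, polar_comm, hvw', hv]
    simp
  · simp [polar_sub_right, polar_smul_right, polar_self, hv, hvw']

section CharTwo

variable [CharP K 2] {z : V}

theorem not_le_ker_polarBilin [FiniteDimensional K V] (hQ : (polarBilin Q).Nondegenerate)
    {X : Submodule K V} (hX : IsTotallySingular Q X) (hXV : 2 * finrank K X = finrank K V)
    (hz : Q z ≠ 0) : ¬X ≤ LinearMap.ker (polarBilin Q z) := fun hle => by
  have hiso := hX.isTotallyIsotropic.sup (isTotallyIsotropic_span_singleton z)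
    (span_singleton_le_orthogonal_of_le_ker hle)
  have := hiso.two_mul_finrank_le hQ
  rw [finrank_sup_span_singleton fun hzX => hz (hX z hzX)] at this
  omega

theorem finrank_projFrom [FiniteDimensional K V] (hQ : (polarBilin Q).Nondegenerate)
    {X : Submodule K V} (hX : IsTotallySingular Q X) (hXV : 2 * finrank K X = finrank K V)
    (hz : Q z ≠ 0) : finrank K (projFrom Q z X) = finrank K X := by
  rw [projFrom, finrank_sup_span_singleton fun (hzX : z ∈ X ⊓ _) => hz (hX z hzX.1),
    finrank_inf_ker_add_one (not_le_ker_polarBilin hQ hX hXV hz)]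

theorem isTotallyIsotropic_projFrom {X : Submodule K V} (hX : IsTotallyIsotropic Q X) :
    IsTotallyIsotropic Q (projFrom Q z X) :=
  (hX.mono inf_le_left).sup (isTotallyIsotropic_span_singleton z)
    (span_singleton_le_orthogonal_of_le_ker inf_le_right)

theorem IsTotallyIsotropic.exists_isTotallySingular_sup_span_eq [PerfectRing K 2]
    {U : Submodule K V} (hU : IsTotallyIsotropic Q U) (hzU : z ∈ U) (hz : Q z ≠ 0) :
    ∃ U₀, IsTotallySingular Q U₀ ∧ U₀ ⊔ span K {z} = U := by
  let U₀ : Submodule K V :=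
    { carrier := {u | u ∈ U ∧ Q u = 0}
      add_mem' := fun {x y} ⟨hx, hQx⟩ ⟨hy, hQy⟩ => ⟨add_mem hx hy, by
        rw [map_add_eq_add_add_polar, hQx, hQy, hU x hx y hy, add_zero, add_zero]⟩
      zero_mem' := ⟨zero_mem U, map_zero Q⟩
      smul_mem' := fun c x ⟨hx, hQx⟩ => ⟨smul_mem U c hx, by
        rw [QuadraticMap.map_smul, hQx, smul_zero]⟩ }
  refine ⟨U₀, fun u hu => hu.2, le_antisymm (sup_le (fun u hu => hu.1)
    ((span_singleton_le_iff_mem _ _).mpr hzU)) fun u hu => ?_⟩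
  -- squaring is onto, so some `c • z` has the same `Q`-value as `u`, and `u + c • z` is singular
  obtain ⟨c, hc⟩ := surjective_frobenius K 2 (Q u / Q z)
  have hcz : Q (c • z) = Q u := by
    rw [QuadraticMap.map_smul, smul_eq_mul, ← pow_two, ← frobenius_def, hc, div_mul_cancel₀ _ hz]
  have hu₀ : u + c • z ∈ U₀ := by
    refine ⟨add_mem hu (smul_mem U c hzU), ?_⟩
    rw [map_add_eq_add_add_polar, hcz, polar_smul_right, hU u hu z hzU, smul_zero, add_zero,
      CharTwo.add_self_eq_zero]
  rw [← add_sub_cancel_right u (c • z)]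
  exact sub_mem (mem_sup_left hu₀) (mem_sup_right (smul_mem _ c (mem_span_singleton_self z)))

end CharTwo

theorem projFrom_inf_projFrom {X Y : Submodule K V} (hX : IsTotallySingular Q X)
    (hY : IsTotallySingular Q Y) (hXY : X ⊓ Y = ⊥) {z : V} (hz : Q z ≠ 0) :
    projFrom Q z X ⊓ projFrom Q z Y = span K {z} := by
  have hz_mem : ∀ W : Submodule K V, span K {z} ≤ projFrom Q z W := fun _ => le_sup_right
  refine le_antisymm (fun v ⟨hvX, hvY⟩ => ?_) (le_inf (hz_mem X) (hz_mem Y))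
  obtain ⟨x, hx, _, hs, rfl⟩ := mem_sup.mp hvX
  obtain ⟨a, rfl⟩ := mem_span_singleton.mp hs
  obtain ⟨y, hy, _, ht, hyx⟩ := mem_sup.mp hvY
  obtain ⟨b, rfl⟩ := mem_span_singleton.mp ht
  have hxy : x = y + (b - a) • z := by linear_combination (norm := module) -hyx
  -- `y ⊥ z` and `Q x = Q y = 0`, so `(b - a)² Q z = 0`
  have hba : (b - a) * (b - a) * Q z = 0 := by
    have hyz : polar Q y z = 0 := by rw [polar_comm]; exact hy.2
    have := hX x hx.1
    rwa [hxy, map_add_eq_add_add_polar, hY y hy.1, QuadraticMap.map_smul, polar_smul_right, hyz,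
      smul_zero, zero_add, add_zero, smul_eq_mul] at this
  obtain rfl : x = y := by
    rw [hxy, mul_self_eq_zero.mp ((mul_eq_zero.mp hba).resolve_right hz), zero_smul, add_zero]
  have hx0 : x ∈ X ⊓ Y := ⟨hx.1, hy.1⟩
  rw [hXY, mem_bot] at hx0
  simp [hx0, mem_span_singleton]

theorem disjoint_of_projFrom_inf_eq {U U₀ X : Submodule K V} {z : V}
    (hU : IsTotallyIsotropic Q U) (hzU : z ∈ U) (hU₀ : IsTotallySingular Q U₀) (hU₀U : U₀ ≤ U)
    (hz : Q z ≠ 0) (h : projFrom Q z X ⊓ U = span K {z}) : Disjoint X U₀ := by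
  refine disjoint_def.mpr fun x hxX hxU₀ => ?_
  have hx : x ∈ span K {z} := h ▸ ⟨mem_sup_left ⟨hxX, hU z hzU x (hU₀U hxU₀)⟩, hU₀U hxU₀⟩
  obtain ⟨c, rfl⟩ := mem_span_singleton.mp hx
  have := hU₀ _ hxU₀
  rw [QuadraticMap.map_smul, smul_eq_mul, mul_eq_zero, mul_self_eq_zero] at this
  simp [this.resolve_right hz]

theorem exists_ne_zero_projection_mem_orthogonal [FiniteDimensional K V]
    {X₁ X₂ U : Submodule K V} (h : IsCompl X₁ X₂) (h₁ : IsTotallySingular Q X₁)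
    (h₂ : IsTotallySingular Q X₂) (hU : IsTotallySingular Q U) (hodd : Odd (finrank K U)) :
    ∃ y ∈ U, y ≠ 0 ∧ X₁.projection X₂ h y ∈ orthogonal (polarBilin Q) U := by
  set π := X₁.projection X₂ h
  let B : U →ₗ[K] U →ₗ[K] K := (polarBilin Q).compl₁₂ (π ∘ₗ U.subtype) U.subtype
  -- `x = π x + (x - π x)` with all three vectors singular
  have hB : B.IsAlt := fun x => by
    have h₁x : Q (π x) = 0 := h₁ _ (projection_apply_mem h x)
    have h₂x : Q (x - π x) = 0 := h₂ _ (sub_projection_mem h x)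
    have hsplit : polar Q (π x) x = polar Q (π x) (π x + (x - π x)) := by rw [add_sub_cancel]
    change polar Q (π x) x = 0
    rw [hsplit, polar_add_right, polar_self, h₁x, smul_zero, zero_add, polar, add_sub_cancel,
      hU x x.2, h₁x, h₂x, sub_zero, sub_zero]
  obtain ⟨y, hy0, hy⟩ := hB.exists_ne_zero_forall_eq_zero_of_odd hodd
  refine ⟨y, y.2, by simpa using hy0, fun u hu => ?_⟩
  change polar Q u (π y) = 0
  rw [polar_comm]
  exact hy ⟨u, hu⟩

structure IsMaximalPartialSpread (Q : QuadraticForm K V) (n : ℕ) (S : Set (Submodule K V)) :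
    Prop where
  finrank_eq : ∀ X ∈ S, finrank K X = n
  isTotallySingular : ∀ X ∈ S, IsTotallySingular Q X
  inf_eq_bot : ∀ X ∈ S, ∀ Y ∈ S, X ≠ Y → X ⊓ Y = ⊥
  exists_inf_ne_bot : ∀ Y, Y ∉ S → finrank K Y = n → IsTotallySingular Q Y → ∃ X ∈ S, X ⊓ Y ≠ ⊥

namespace IsMaximalPartialSpread

variable {n : ℕ} {S : Set (Submodule K V)} {U₀ : Submodule K V}

theorem nonempty (hS : IsMaximalPartialSpread Q n S)
    (h : ∃ W : Submodule K V, finrank K W = n ∧ IsTotallySingular Q W) : S.Nonempty := by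
  obtain ⟨W, hWn, hW⟩ := h
  by_cases hWS : W ∈ S
  · exact ⟨W, hWS⟩
  · obtain ⟨X, hX, -⟩ := hS.exists_inf_ne_bot W hWS hWn hW
    exact ⟨X, hX⟩

theorem inf_orthogonal_ne_bot [FiniteDimensional K V] (hQ : (polarBilin Q).Nondegenerate)
    (hS : IsMaximalPartialSpread Q n S) (hV : finrank K V = 2 * n)
    (hU₀n : finrank K U₀ + 1 = n) {X : Submodule K V} (hX : X ∈ S) :
    X ⊓ orthogonal (polarBilin Q) U₀ ≠ ⊥ := fun h => by
  have := finrank_add_finrank_le_of_disjoint (disjoint_iff.mpr h)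
  rw [hS.finrank_eq X hX, LinearMap.BilinForm.finrank_orthogonal hQ] at this
  omega

theorem finrank_inf_orthogonal_le_one [FiniteDimensional K V]
    (hQ : (polarBilin Q).Nondegenerate) (hS : IsMaximalPartialSpread Q n S)
    (hV : finrank K V = 2 * n) (hU₀ : IsTotallySingular Q U₀) (hU₀n : finrank K U₀ + 1 = n)
    (hSU₀ : ∀ X ∈ S, Disjoint X U₀) {X : Submodule K V} (hX : X ∈ S) :
    finrank K (X ⊓ orthogonal (polarBilin Q) U₀ : Submodule K V) ≤ 1 := by
  have hiso := hU₀.isTotallyIsotropic.sup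
    ((hS.isTotallySingular X hX).isTotallyIsotropic.mono inf_le_left) inf_le_right
  have hdisj : U₀ ⊓ (X ⊓ orthogonal (polarBilin Q) U₀) = ⊥ :=
    eq_bot_iff.mpr fun x ⟨hxU₀, hxX, _⟩ => (mem_bot K).mpr (disjoint_def.mp (hSU₀ X hX) x hxX hxU₀)
  have := finrank_sup_add_finrank_inf_eq U₀ (X ⊓ orthogonal (polarBilin Q) U₀)
  have := hiso.two_mul_finrank_le hQ
  rw [hdisj, finrank_bot] at *
  omega

theorem exists_add_smul_mem [FiniteDimensional K V] (hS : IsMaximalPartialSpread Q n S)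
    (hU₀ : IsTotallySingular Q U₀) (hU₀n : finrank K U₀ + 1 = n) (hU₀ne : U₀ ≠ ⊥)
    (hSU₀ : ∀ X ∈ S, Disjoint X U₀) {v : V} (hvO : v ∈ orthogonal (polarBilin Q) U₀)
    (hv : Q v = 0) (hvU₀ : v ∉ U₀) : ∃ X ∈ S, ∃ b ∈ U₀, ∃ c : K, c ≠ 0 ∧ b + c • v ∈ X := by
  have hYS : U₀ ⊔ span K {v} ∉ S := fun hY =>
    hU₀ne (disjoint_self.mp ((hSU₀ _ hY).mono_left le_sup_left))
  have hY : IsTotallySingular Q (U₀ ⊔ span K {v}) :=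
    hU₀.sup (isTotallySingular_span_singleton hv) ((span_singleton_le_iff_mem _ _).mpr hvO)
  obtain ⟨X, hX, hXY⟩ := hS.exists_inf_ne_bot _ hYS
    (by rw [finrank_sup_span_singleton hvU₀, hU₀n]) hY
  obtain ⟨x, ⟨hxX, hxY⟩, hx0⟩ := exists_mem_ne_zero_of_ne_bot hXY
  obtain ⟨b, hb, _, hs, rfl⟩ := mem_sup.mp hxY
  obtain ⟨c, rfl⟩ := mem_span_singleton.mp hs
  refine ⟨X, hX, b, hb, c, fun hc => hx0 ?_, hxX⟩
  rw [hc, zero_smul, add_zero] at hxX ⊢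
  exact disjoint_def.mp (hSU₀ X hX) b hxX hb

theorem exists_polar_ne_zero [FiniteDimensional K V] (hQ : (polarBilin Q).Nondegenerate)
    (hS : IsMaximalPartialSpread Q n S) (hU₀ : IsTotallySingular Q U₀)
    (hU₀n : finrank K U₀ + 1 = n) (hU₀ne : U₀ ≠ ⊥) (hSU₀ : ∀ X ∈ S, Disjoint X U₀) {v : V}
    (hvO : v ∈ orthogonal (polarBilin Q) U₀) (hv : Q v = 0) (hvU₀ : v ∉ U₀) :
    ∃ X ∈ S, ∃ u ∈ X ⊓ orthogonal (polarBilin Q) U₀, polar Q v u ≠ 0 := by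
  have hU₀O : U₀ ≤ orthogonal (polarBilin Q) U₀ := fun x hx w hw =>
    hU₀.isTotallyIsotropic w hw x hx
  obtain ⟨w, hwO, hvw⟩ : ∃ w ∈ orthogonal (polarBilin Q) U₀, polar Q v w ≠ 0 := by
    by_contra! h
    refine hvU₀ ?_
    rw [← LinearMap.BilinForm.orthogonal_orthogonal hQ isRefl_polarBilin U₀]
    exact fun w hw => by rw [polarBilin_apply_apply, polar_comm]; exact h w hw
  obtain ⟨v', hv'O, hv', hvv'⟩ := exists_map_eq_zero_polar_eq_one hv hvO hwO hvw
  have hv'U₀ : v' ∉ U₀ := fun h => one_ne_zero <| by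
    rw [← hvv', polar_comm]; exact polar_eq_zero_of_mem_orthogonal hvO h
  obtain ⟨X, hX, b, hb, c, hc, hbcX⟩ :=
    hS.exists_add_smul_mem hU₀ hU₀n hU₀ne hSU₀ hv'O hv' hv'U₀
  refine ⟨X, hX, b + c • v', ⟨hbcX, add_mem (hU₀O hb) (smul_mem _ c hv'O)⟩, ?_⟩
  rwa [polar_add_right, polar_smul_right, hvv', polar_comm, polar_eq_zero_of_mem_orthogonal hvO hb,
    smul_eq_mul, mul_one, zero_add]

theorem polar_eq_zero_of_mem_inf_orthogonal [FiniteDimensional K V]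
    (hQ : (polarBilin Q).Nondegenerate) (hS : IsMaximalPartialSpread Q n S)
    (hV : finrank K V = 2 * n) (hU₀ : IsTotallySingular Q U₀) (hU₀n : finrank K U₀ + 1 = n)
    (hodd : Odd (finrank K U₀)) (hSU₀ : ∀ X ∈ S, Disjoint X U₀) {X₁ X₂ : Submodule K V}
    (hX₁ : X₁ ∈ S) (hX₂ : X₂ ∈ S) {v u : V} (hv : v ∈ X₁ ⊓ orthogonal (polarBilin Q) U₀)
    (hu : u ∈ X₂ ⊓ orthogonal (polarBilin Q) U₀) : polar Q v u = 0 := by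
  obtain rfl | hne := eq_or_ne X₁ X₂
  · exact (hS.isTotallySingular X₁ hX₁).isTotallyIsotropic v hv.1 u hu.1
  have hcompl : IsCompl X₁ X₂ := (isCompl_iff_disjoint _ _ (by
    rw [hS.finrank_eq X₁ hX₁, hS.finrank_eq X₂ hX₂]; omega)).mpr
    (disjoint_iff.mpr (hS.inf_eq_bot X₁ hX₁ X₂ hX₂ hne))
  obtain ⟨y, hyU₀, hy0, hyO⟩ := exists_ne_zero_projection_mem_orthogonal hcompl
    (hS.isTotallySingular X₁ hX₁) (hS.isTotallySingular X₂ hX₂) hU₀ hodd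
  set x := X₁.projection X₂ hcompl y
  have hyx : y - x ∈ X₂ := sub_projection_mem hcompl y
  have hx0 : x ≠ 0 := fun hx => hy0 <| by
    rw [hx, sub_zero] at hyx
    exact disjoint_def.mp (hSU₀ X₂ hX₂) y hyx hyU₀
  have hxu : polar Q x u = 0 := by
    have h₂ := (hS.isTotallySingular X₂ hX₂).isTotallyIsotropic _ hyx u hu.1
    rwa [polar_sub_left, polar_eq_zero_of_mem_orthogonal hu.2 hyU₀, zero_sub, neg_eq_zero] at h₂
  have hline : span K {x} = X₁ ⊓ orthogonal (polarBilin Q) U₀ :=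
    eq_of_le_of_finrank_le ((span_singleton_le_iff_mem _ _).mpr ⟨projection_apply_mem _ y, hyO⟩)
      ((hS.finrank_inf_orthogonal_le_one hQ hV hU₀ hU₀n hSU₀ hX₁).trans
        (finrank_span_singleton hx0).ge)
  obtain ⟨c, rfl⟩ := mem_span_singleton.mp (hline ▸ hv)
  rw [polar_smul_left, hxu, smul_zero]

theorem exists_not_disjoint_of_odd [FiniteDimensional K V] (hQ : (polarBilin Q).Nondegenerate)
    (hS : IsMaximalPartialSpread Q n S) (hV : finrank K V = 2 * n) (hSne : S.Nonempty)
    (hU₀ : IsTotallySingular Q U₀) (hU₀n : finrank K U₀ + 1 = n) (hodd : Odd (finrank K U₀)) :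
    ∃ X ∈ S, ¬Disjoint X U₀ := by
  by_contra! hSU₀
  have hU₀ne : U₀ ≠ ⊥ := by rintro rfl; simp at hodd
  obtain ⟨X, hX⟩ := hSne
  obtain ⟨v, hv, hv0⟩ := exists_mem_ne_zero_of_ne_bot (hS.inf_orthogonal_ne_bot hQ hV hU₀n hX)
  have hvU₀ : v ∉ U₀ := fun h => hv0 (disjoint_def.mp (hSU₀ X hX) v hv.1 h)
  obtain ⟨Y, hY, u, hu, hvu⟩ := hS.exists_polar_ne_zero hQ hU₀ hU₀n hU₀ne hSU₀ hv.2
    (hS.isTotallySingular X hX v hv.1) hvU₀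
  exact hvu (hS.polar_eq_zero_of_mem_inf_orthogonal hQ hV hU₀ hU₀n hodd hSU₀ hX hY hv hu)

end IsMaximalPartialSpread

end QuadraticMap

theorem stmt_9_general (q m : ℕ) (hqe : Even q) (hm : 2 ≤ m)
    (K : Type) [Field K] [Fintype K] (hK : Fintype.card K = q)
    (V : Type) [AddCommGroup V] [Module K V]
    (hdim : Module.finrank K V = 4 * m)
    (Q : QuadraticForm K V)
    (hnd : ∀ v : V, (∀ w : V, QuadraticMap.polar Q v w = 0) → v = 0)
    (hhyp : ∃ W : Submodule K V, Module.finrank K W = 2 * m ∧ ∀ v ∈ W, Q v = 0)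
    (z : V) (hzns : Q z ≠ 0)
    (S : Set (Submodule K V))
    (hts : ∀ X ∈ S, Module.finrank K X = 2 * m ∧ ∀ v ∈ X, Q v = 0)
    (hdisj : ∀ X ∈ S, ∀ Y ∈ S, X ≠ Y → X ⊓ Y = ⊥)
    (hmax : ∀ Y : Submodule K V, Y ∉ S →
      Module.finrank K Y = 2 * m → (∀ v ∈ Y, Q v = 0) →
      ∃ X ∈ S, X ⊓ Y ≠ ⊥) :
    -- write `P X = ⟨z^⊥ ∩ X, z⟩` for the preimage in `V` of the projected space
    ∀ P : Submodule K V → Submodule K V,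
      (∀ X, P X = (X ⊓ LinearMap.ker (Q.polarBilin z)) ⊔ Submodule.span K {z}) →
      -- `Σ/z` consists of totally isotropic `2m`-spaces containing `z`:
      (∀ X ∈ S, Module.finrank K (P X) = 2 * m ∧ z ∈ P X ∧
        ∀ u ∈ P X, ∀ v ∈ P X, QuadraticMap.polar Q u v = 0) ∧
      -- pairwise the projections meet trivially:
      (∀ X ∈ S, ∀ Y ∈ S, X ≠ Y → P X ⊓ P Y = Submodule.span K {z}) ∧
      -- maximality in the quotient `z^⊥/z`:
      (∀ U : Submodule K V, z ∈ U → Module.finrank K U = 2 * m →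
        (∀ u ∈ U, ∀ v ∈ U, QuadraticMap.polar Q u v = 0) →
        U ∉ P '' S →
        ∃ X ∈ S, P X ⊓ U ≠ Submodule.span K {z}) := by
  intro P hP
  obtain rfl : P = projFrom Q z := funext hP
  have : FiniteDimensional K V := .of_finrank_pos (by omega)
  have : CharP K 2 := ringChar.of_eq (FiniteField.even_card_iff_char_two.mpr (by
    rw [hK]; exact Nat.even_iff.mp hqe))
  have hQ : (polarBilin Q).Nondegenerate :=
    isRefl_polarBilin.nondegenerate_iff_separatingLeft.mpr hnd
  have hS : IsMaximalPartialSpread Q (2 * m) S :=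
    ⟨fun X hX => (hts X hX).1, fun X hX => (hts X hX).2, hdisj, hmax⟩
  refine ⟨fun X hX => ⟨?_, mem_sup_right (mem_span_singleton_self z),
      isTotallyIsotropic_projFrom (hS.isTotallySingular X hX).isTotallyIsotropic⟩,
    fun X hX Y hY hXY => projFrom_inf_projFrom (hS.isTotallySingular X hX)
      (hS.isTotallySingular Y hY) (hdisj X hX Y hY hXY) hzns,
    fun U hzU hUm hU _ => ?_⟩
  · rw [finrank_projFrom hQ (hS.isTotallySingular X hX) (by rw [hS.finrank_eq X hX]; omega) hzns,
      hS.finrank_eq X hX]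
  by_contra! h
  obtain ⟨U₀, hU₀, rfl⟩ := IsTotallyIsotropic.exists_isTotallySingular_sup_span_eq hU hzU hzns
  have hU₀m : finrank K U₀ + 1 = 2 * m := by
    rw [← hUm, finrank_sup_span_singleton fun hzU₀ => hzns (hU₀ z hzU₀)]
  obtain ⟨X, hX, hXU₀⟩ := hS.exists_not_disjoint_of_odd hQ (by omega) (hS.nonempty hhyp) hU₀ hU₀m
    ⟨m - 1, by omega⟩
  exact hXU₀ (disjoint_of_projFrom_inf_eq hU hzU hU₀ le_sup_left hzns (h X hX))

/-- Projection of a maximal orthogonal partial spread.  For `q`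
even, `V` hyperbolic orthogonal of dimension `4m` and `z` a nonsingular point,
if `Σ` is a maximal orthogonal partial spread of `V` then
`Σ/z = { ⟨z^⊥ ∩ X, z⟩/z : X ∈ Σ }` is a maximal symplectic partial spread of
`z^⊥/z`.  We encode the totally isotropic `(2m−1)`-subspaces of `z^⊥/z` by
their preimages: the totally isotropic `2m`-subspaces of `V` containing `z`
(such subspaces automatically lie in `z^⊥`); two subspaces of the quotient
intersect trivially iff the preimages meet exactly in `⟨z⟩`. -/
theorem stmt_9 (q m : ℕ) (hq : IsPrimePow q) (hqe : Even q) (hm : 2 ≤ m)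
    (K : Type) [Field K] [Fintype K] (hK : Fintype.card K = q)
    (V : Type) [AddCommGroup V] [Module K V]
    (hdim : Module.finrank K V = 4 * m)
    (Q : QuadraticForm K V)
    (hnd : ∀ v : V, (∀ w : V, QuadraticMap.polar Q v w = 0) → v = 0)
    (hhyp : ∃ W : Submodule K V, Module.finrank K W = 2 * m ∧ ∀ v ∈ W, Q v = 0)
    (z : V) (hz0 : z ≠ 0) (hzns : Q z ≠ 0)
    (S : Set (Submodule K V))
    (hts : ∀ X ∈ S, Module.finrank K X = 2 * m ∧ ∀ v ∈ X, Q v = 0)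
    (hdisj : ∀ X ∈ S, ∀ Y ∈ S, X ≠ Y → X ⊓ Y = ⊥)
    (hmax : ∀ Y : Submodule K V, Y ∉ S →
      Module.finrank K Y = 2 * m → (∀ v ∈ Y, Q v = 0) →
      ∃ X ∈ S, X ⊓ Y ≠ ⊥) :
    -- write `P X = ⟨z^⊥ ∩ X, z⟩` for the preimage in `V` of the projected space
    ∀ P : Submodule K V → Submodule K V,
      (∀ X, P X = (X ⊓ LinearMap.ker (Q.polarBilin z)) ⊔ Submodule.span K {z}) →
      -- `Σ/z` consists of totally isotropic `2m`-spaces containing `z`: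
      (∀ X ∈ S, Module.finrank K (P X) = 2 * m ∧ z ∈ P X ∧
        ∀ u ∈ P X, ∀ v ∈ P X, QuadraticMap.polar Q u v = 0) ∧
      -- pairwise the projections meet trivially:
      (∀ X ∈ S, ∀ Y ∈ S, X ≠ Y → P X ⊓ P Y = Submodule.span K {z}) ∧
      -- maximality in the quotient `z^⊥/z`:
      (∀ U : Submodule K V, z ∈ U → Module.finrank K U = 2 * m →
        (∀ u ∈ U, ∀ v ∈ U, QuadraticMap.polar Q u v = 0) →
        U ∉ P '' S →
        ∃ X ∈ S, P X ⊓ U ≠ Submodule.span K {z}) :=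
  stmt_9_general q m hqe hm K hK V hdim Q hnd hhyp z hzns S hts hdisj hmax
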